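/- Simulation of equi-recursive reduction: if · ⊢ₑ e₁ : A ▷ e₁' and e₁ ↪ₑ e₂, then there exists e₂' such that e₁' ↪* e₂' and · ⊢ₑ e₂ : A ▷ e₂'. -/

import Mathlib

/-- Types: Int, Top, arrow, de Bruijn type variables, and recursive types μ. -/
inductive Ty : Type
| int : Ty
| top : Ty
| arrow : Ty → Ty → Ty
| var : Nat → Ty
| mu : Ty → Ty
deriving DecidableEq

/-- Shifting of de Bruijn type variables. -/
def tshift (d c : Nat) : Ty → Ty
| .int => .int
| .top => .top
| .arrow A B => .arrow (tshift d c A) (tshift d c B)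
| .var n => if n < c then .var n else .var (n + d)
| .mu A => .mu (tshift d (c+1) A)

/-- Capture-avoiding substitution of type S for variable k. -/
def tsubst (k : Nat) (S : Ty) : Ty → Ty
| .int => .int
| .top => .top
| .arrow A B => .arrow (tsubst k S A) (tsubst k S B)
| .var n => if n = k then S else if k < n then .var (n-1) else .var n
| .mu A => .mu (tsubst (k+1) (tshift 1 0 S) A)

/-- Well-formedness: all free type variables are below n. -/
def Ty.wf : Nat → Ty → Prop
| _, .int => True
| _, .top => True
| n, .arrow A B => A.wf n ∧ B.wf n
| n, .var i => i < n
| n, .mu A => A.wf (n+1)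

/-- Brandt–Henglein inductive equi-recursive type equality H ⊢ A ≐ B. -/
inductive TyEq : List (Ty × Ty) → Ty → Ty → Prop
| assump : (A, B) ∈ H → TyEq H A B
| refl : TyEq H A A
| trans : TyEq H A B → TyEq H B C → TyEq H A C
| symm : TyEq H A B → TyEq H B A
| unfold : TyEq H (.mu A) (tsubst 0 (.mu A) A)
| arrfix : TyEq ((Ty.arrow A1 A2, Ty.arrow B1 B2) :: H) A1 B1 →
           TyEq ((Ty.arrow A1 A2, Ty.arrow B1 B2) :: H) A2 B2 →
           TyEq H (.arrow A1 A2) (.arrow B1 B2)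

/-- Cast operators, with de Bruijn cast variables (bound by cfix). -/
inductive Cast : Type
| cvar : Nat → Cast
| id : Cast
| fold : Ty → Cast
| unfold : Ty → Cast
| arrow : Cast → Cast → Cast
| seq : Cast → Cast → Cast
| cfix : Cast → Cast
deriving DecidableEq

/-- The dual (reverse) cast ¬c. -/
def Cast.dual : Cast → Cast
| .cvar i => .cvar i
| .id => .id
| .fold A => .unfold A
| .unfold A => .fold A
| .arrow c1 c2 => .arrow c1.dual c2.dual
| .seq c1 c2 => .seq c2.dual c1.dual
| .cfix c => .cfix c.dual

/-- Shifting of cast variables. -/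
def cshift (d c : Nat) : Cast → Cast
| .cvar n => if n < c then .cvar n else .cvar (n+d)
| .id => .id
| .fold A => .fold A
| .unfold A => .unfold A
| .arrow c1 c2 => .arrow (cshift d c c1) (cshift d c c2)
| .seq c1 c2 => .seq (cshift d c c1) (cshift d c c2)
| .cfix c1 => .cfix (cshift d (c+1) c1)

/-- Capture-avoiding substitution of a cast for cast variable k. -/
def csubst (k : Nat) (s : Cast) : Cast → Cast
| .cvar n => if n = k then s else if k < n then .cvar (n-1) else .cvar n
| .id => .id
| .fold A => .fold A
| .unfold A => .unfold A
| .arrow c1 c2 => .arrow (csubst k s c1) (csubst k s c2)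
| .seq c1 c2 => .seq (csubst k s c1) (csubst k s c2)
| .cfix c1 => .cfix (csubst (k+1) (cshift 1 0 s) c1)

/-- Type casting judgment 𝔼 ⊢ A ↪ B : c (cast context as de Bruijn list). -/
inductive TypCast : List (Ty × Ty) → Ty → Ty → Cast → Prop
| id : TypCast E A A .id
| arrow : TypCast E A1 B1 c1 → TypCast E A2 B2 c2 →
    TypCast E (.arrow A1 A2) (.arrow B1 B2) (.arrow c1 c2)
| unfold : TypCast E (.mu A) (tsubst 0 (.mu A) A) (.unfold (.mu A))
| fold : TypCast E (tsubst 0 (.mu A) A) (.mu A) (.fold (.mu A))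
| seq : TypCast E A B c1 → TypCast E B C c2 → TypCast E A C (.seq c1 c2)
| var : E[n]? = some (A, B) → TypCast E A B (.cvar n)
| fix : TypCast ((Ty.arrow A1 A2, Ty.arrow B1 B2) :: E)
           (.arrow A1 A2) (.arrow B1 B2) (.arrow c1 c2) →
        TypCast E (.arrow A1 A2) (.arrow B1 B2) (.cfix (.arrow c1 c2))

/-- Terms of λᵘFi (de Bruijn term variables). -/
inductive Tm : Type
| var : Nat → Tm
| lit : Int → Tm
| app : Tm → Tm → Tm
| abs : Ty → Tm → Tm
| cast : Cast → Tm → Tm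
deriving DecidableEq

def shiftTm (d c : Nat) : Tm → Tm
| .var n => if n < c then .var n else .var (n+d)
| .lit n => .lit n
| .app a b => .app (shiftTm d c a) (shiftTm d c b)
| .abs A e => .abs A (shiftTm d (c+1) e)
| .cast cc e => .cast cc (shiftTm d c e)

/-- Capture-avoiding term substitution. -/
def substTm (k : Nat) (s : Tm) : Tm → Tm
| .var n => if n = k then s else if k < n then .var (n-1) else .var n
| .lit n => .lit n
| .app a b => .app (substTm k s a) (substTm k s b)
| .abs A e => .abs A (substTm (k+1) (shiftTm 1 0 s) e)
| .cast cc e => .cast cc (substTm k s e)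

/-- Values of λᵘFi. -/
inductive Value : Tm → Prop
| lit : Value (.lit n)
| abs : Value (.abs A e)
| fold : Value v → Value (.cast (.fold A) v)
| arrow : Value v → Value (.cast (.arrow c1 c2) v)

/-- Call-by-value reduction of λᵘFi, including the cast push rules. -/
inductive Step : Tm → Tm → Prop
| beta : Value v → Step (.app (.abs A e) v) (substTm 0 v e)
| appl : Step e1 e1' → Step (.app e1 e2) (.app e1' e2)
| appr : Value v → Step e2 e2' → Step (.app v e2) (.app v e2')
| cast : Step e e' → Step (.cast c e) (.cast c e')
| castId : Value v → Step (.cast .id v) v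
| castArr : Value v1 → Value v2 →
    Step (.app (.cast (.arrow c1 c2) v1) v2)
         (.cast c2 (.app v1 (.cast c1.dual v2)))
| castSeq : Step (.cast (.seq c1 c2) e) (.cast c2 (.cast c1 e))
| castElim : Value v → Step (.cast (.unfold A) (.cast (.fold B) v)) v
| castFix : Step (.cast (.cfix c) e) (.cast (csubst 0 (.cfix c) c) e)

/-- Equi-recursive (cast-free) call-by-value reduction. -/
inductive EStep : Tm → Tm → Prop
| beta : Value v → EStep (.app (.abs A e) v) (substTm 0 v e)
| appl : EStep e1 e1' → EStep (.app e1 e2) (.app e1' e2)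
| appr : Value v → EStep e2 e2' → EStep (.app v e2) (.app v e2')

/-- Erasure of casts. -/
def erase : Tm → Tm
| .var n => .var n
| .lit n => .lit n
| .app a b => .app (erase a) (erase b)
| .abs A e => .abs A (erase e)
| .cast _ e => erase e

/-- Typing of λᵘFi. -/
inductive Typing : List Ty → Tm → Ty → Prop
| var : G[n]? = some A → Typing G (.var n) A
| lit : Typing G (.lit n) .int
| abs : Typing (A :: G) e B → Typing G (.abs A e) (.arrow A B)
| app : Typing G e1 (.arrow A B) → Typing G e2 A → Typing G (.app e1 e2) B
| cast : Typing G e A → TypCast [] A B c → Typing G (.cast c e) B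

/-- Equi-recursive typing with elaboration Γ ⊢ₑ e : A ▷ e'. -/
inductive ETyping : List Ty → Tm → Ty → Tm → Prop
| var : G[n]? = some A → ETyping G (.var n) A (.var n)
| lit : ETyping G (.lit n) .int (.lit n)
| abs : ETyping (A :: G) e B e' → ETyping G (.abs A e) (.arrow A B) (.abs A e')
| app : ETyping G e1 (.arrow A B) e1' → ETyping G e2 A e2' →
        ETyping G (.app e1 e2) B (.app e1' e2')
| eq : ETyping G e A e' → TypCast [] A B c → ETyping G e B (.cast c e')

/-- Iso-recursive Amber subtyping (de Bruijn presentation), n counts bound variable pairs. -/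
inductive AmberSub : Nat → Ty → Ty → Prop
| top : Ty.wf n A → AmberSub n A .top
| int : AmberSub n .int .int
| var : i < n → AmberSub n (.var i) (.var i)
| self : Ty.wf n (.mu A) → AmberSub n (.mu A) (.mu A)
| arrow : AmberSub n B1 A1 → AmberSub n A2 B2 → AmberSub n (.arrow A1 A2) (.arrow B1 B2)
| murec : AmberSub (n+1) A B → AmberSub n (.mu A) (.mu B)

/-- Typing of λᵘ<:Fi: λᵘFi typing plus subsumption. -/
inductive STyping : List Ty → Tm → Ty → Prop
| var : G[n]? = some A → STyping G (.var n) A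
| lit : STyping G (.lit n) .int
| abs : STyping (A :: G) e B → STyping G (.abs A e) (.arrow A B)
| app : STyping G e1 (.arrow A B) → STyping G e2 A → STyping G (.app e1 e2) B
| cast : STyping G e A → TypCast [] A B c → STyping G (.cast c e) B
| sub : STyping G e A → AmberSub 0 A B → STyping G e B

/-- Divergence under a reduction relation. -/
def Diverges (R : Tm → Tm → Prop) (e : Tm) : Prop :=
  ∀ e', Relation.ReflTransGen R e e' → ∃ e'', R e' e''

/-! Induction on the elaboration derivation. Congruence steps of `↪ₑ` lift through the
application and cast contexts of the elaborated term. For a β-step, the elaborations of the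
function and of the argument are first reduced to λᵘFi values that still elaborate the same
source terms: a cast applied to such a value reduces to one (identity casts vanish, `unfold`
cancels `fold`, sequences split, fixpoint casts unroll). A value elaborating a λ at an arrow
type is a stack of arrow casts over a λ; each arrow cast is pushed onto the argument as its
dual cast, and the final β-step is matched by the substitution lemma for elaboration. -/

open Relation

namespace Step

lemma reflTransGen_cast {c : Cast} {e e' : Tm} (h : ReflTransGen Step e e') :
    ReflTransGen Step (.cast c e) (.cast c e') :=
  ReflTransGen.lift (Tm.cast c) (fun _ _ => Step.cast) _ _ h

lemma reflTransGen_appl {e e' f : Tm} (h : ReflTransGen Step e e') :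
    ReflTransGen Step (.app e f) (.app e' f) :=
  ReflTransGen.lift (Tm.app · f) (fun _ _ => Step.appl) _ _ h

lemma reflTransGen_appr {v e e' : Tm} (hv : Value v) (h : ReflTransGen Step e e') :
    ReflTransGen Step (.app v e) (.app v e') :=
  ReflTransGen.lift (Tm.app v) (fun _ _ => Step.appr hv) _ _ h

end Step

@[simp]
lemma cshift_zero (k : Nat) (s : Cast) : cshift 0 k s = s := by
  induction s generalizing k <;> simp [cshift, *]

lemma cshift_cshift (m n k : Nat) (s : Cast) :
    cshift m k (cshift n k s) = cshift (n + m) k s := by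
  induction s generalizing k with
  | cvar i =>
    by_cases hi : i < k
    · simp [cshift, hi]
    · simp [cshift, hi, show ¬ i + n < k by omega, Nat.add_assoc]
  | _ => simp [cshift, *]

namespace TypCast

lemma weaken {E1 E2 : List (Ty × Ty)} {A B : Ty} {c : Cast} (D : List (Ty × Ty))
    (h : TypCast (E1 ++ E2) A B c) :
    TypCast (E1 ++ D ++ E2) A B (cshift D.length E1.length c) := by
  generalize hE : E1 ++ E2 = E at h
  induction h generalizing E1 with
  | id => exact .id
  | arrow _ _ ih1 ih2 => exact .arrow (ih1 hE) (ih2 hE)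
  | unfold => exact .unfold
  | fold => exact .fold
  | seq _ _ ih1 ih2 => exact .seq (ih1 hE) (ih2 hE)
  | @var E n A B hl =>
    subst hE
    simp only [cshift]
    split_ifs with hn
    · exact .var (by grind)
    · exact .var (by grind)
  | fix _ ih =>
    subst hE
    exact .fix (ih (E1 := _ :: E1) rfl)

lemma subst {E1 E2 : List (Ty × Ty)} {A B X Y : Ty} {c s : Cast}
    (h : TypCast (E1 ++ (X, Y) :: E2) A B c) (hs : TypCast E2 X Y s) :
    TypCast (E1 ++ E2) A B (csubst E1.length (cshift E1.length 0 s) c) := by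
  generalize hE : E1 ++ (X, Y) :: E2 = E at h
  induction h generalizing E1 with
  | id => exact .id
  | arrow _ _ ih1 ih2 => exact .arrow (ih1 hE) (ih2 hE)
  | unfold => exact .unfold
  | fold => exact .fold
  | seq _ _ ih1 ih2 => exact .seq (ih1 hE) (ih2 hE)
  | @var E n A B hl =>
    subst hE
    simp only [csubst]
    rcases lt_trichotomy n E1.length with hn | rfl | hn
    · rw [if_neg (by omega), if_neg (by omega)]
      exact .var (by grind)
    · obtain ⟨rfl, rfl⟩ : X = A ∧ Y = B := by simpa using hl
      simpa using hs.weaken (E1 := []) E1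
    · rw [if_neg (by omega), if_pos hn]
      exact .var (by grind)
  | fix _ ih =>
    subst hE
    have := ih (E1 := _ :: E1) rfl
    simp only [csubst, List.length_cons, cshift_cshift] at this ⊢
    exact .fix this

lemma dual {E : List (Ty × Ty)} {A B : Ty} {c : Cast} (h : TypCast E A B c) :
    TypCast (E.map Prod.swap) B A c.dual := by
  induction h with
  | id => exact .id
  | arrow _ _ ih1 ih2 => exact .arrow ih1 ih2
  | unfold => exact .fold
  | fold => exact .unfold
  | seq _ _ ih1 ih2 => exact .seq ih2 ih1
  | var hl => exact .var (by simp [hl])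
  | fix _ ih => exact .fix ih

end TypCast

namespace ETyping

lemma shiftTm_eq_self {G : List Ty} {e e' : Tm} {A : Ty} (h : ETyping G e A e') (d : Nat)
    {k : Nat} (hk : G.length ≤ k) : shiftTm d k e = e ∧ shiftTm d k e' = e' := by
  induction h generalizing k with
  | var hl =>
    have hn := (List.getElem?_eq_some_iff.1 hl).1
    simp [shiftTm, hn.trans_le hk]
  | lit => exact ⟨rfl, rfl⟩
  | abs _ ih =>
    obtain ⟨h1, h2⟩ := ih (k := k + 1) (by simpa using hk)
    simp [shiftTm, h1, h2]
  | app _ _ ih1 ih2 =>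
    obtain ⟨h1, h2⟩ := ih1 hk
    obtain ⟨h3, h4⟩ := ih2 hk
    simp [shiftTm, h1, h2, h3, h4]
  | eq _ _ ih =>
    obtain ⟨h1, h2⟩ := ih hk
    simp [shiftTm, h1, h2]

lemma weaken_append {G : List Ty} {e e' : Tm} {A : Ty} (h : ETyping G e A e') (D : List Ty) :
    ETyping (G ++ D) e A e' := by
  induction h with
  | var hl => exact .var (by grind)
  | lit => exact .lit
  | abs _ ih => exact .abs ih
  | app _ _ ih1 ih2 => exact .app ih1 ih2
  | eq _ hc ih => exact .eq ih hc

lemma subst {G : List Ty} {e e' v u : Tm} {A B : Ty}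
    (h : ETyping (G ++ [A]) e B e') (hv : ETyping [] v A u) :
    ETyping G (substTm G.length v e) B (substTm G.length u e') := by
  generalize hG : G ++ [A] = G' at h
  induction h generalizing G with
  | @var G' n T hl =>
    subst hG
    have hn : n < G.length + 1 := by simpa using (List.getElem?_eq_some_iff.1 hl).1
    rcases Nat.lt_succ_iff_lt_or_eq.1 hn with hn | rfl
    · simp only [substTm, if_neg hn.ne, if_neg (Nat.lt_asymm hn)]
      exact .var (by grind)
    · obtain rfl : A = T := by simpa using hl
      simpa [substTm] using hv.weaken_append G
  | lit => exact .lit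
  | abs _ ih =>
    subst hG
    obtain ⟨hv1, hu1⟩ := hv.shiftTm_eq_self 1 (Nat.zero_le 0)
    have := ih (G := _ :: G) rfl
    simp only [substTm, List.length_cons, hv1, hu1] at this ⊢
    exact .abs this
  | app _ _ ih1 ih2 => exact .app (ih1 hG) (ih2 hG)
  | eq _ hc ih => exact .eq (ih hG) hc

lemma exists_fold_of_mu {G : List Ty} {v u : Tm} {A : Ty} (h : ETyping G v (.mu A) u)
    (hu : Value u) :
    ∃ u₀, u = .cast (.fold (.mu A)) u₀ ∧ Value u₀ ∧ ETyping G v (tsubst 0 (.mu A) A) u₀ := by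
  cases h with
  | var => cases hu
  | app => cases hu
  | eq h hc =>
    cases hu with
    | fold hu₀ =>
      generalize hM : Ty.mu A = M at hc
      cases hc
      cases hM
      exact ⟨_, rfl, hu₀, h⟩
    | arrow =>
      generalize hM : Ty.mu A = M at hc
      cases hc
      cases hM

end ETyping

lemma TypCast.exists_value_of_cast {G : List Ty} {T B : Ty} {c : Cast} {v u : Tm}
    (hc : TypCast [] T B c) (hu : Value u) (h : ETyping G v T u) :
    ∃ u', ReflTransGen Step (.cast c u) u' ∧ Value u' ∧ ETyping G v B u' := by
  generalize hE : [] = E at hc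
  induction hc generalizing u with
  | id => exact ⟨u, .single (.castId hu), hu, h⟩
  | arrow hc₁ hc₂ =>
    subst hE
    exact ⟨_, .refl, .arrow hu, .eq h (.arrow hc₁ hc₂)⟩
  | unfold =>
    obtain ⟨u₀, rfl, hu₀, h₀⟩ := h.exists_fold_of_mu hu
    exact ⟨u₀, .single (.castElim hu₀), hu₀, h₀⟩
  | fold => exact ⟨_, .refl, .fold hu, .eq h .fold⟩
  | seq _ _ ih₁ ih₂ =>
    obtain ⟨u₁, s₁, hu₁, h₁⟩ := ih₁ hu h hE
    obtain ⟨u₂, s₂, hu₂, h₂⟩ := ih₂ hu₁ h₁ hE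
    exact ⟨u₂, .head .castSeq ((Step.reflTransGen_cast s₁).trans s₂), hu₂, h₂⟩
  | var hl =>
    subst hE
    simp at hl
  | fix hc ih =>
    subst hE
    -- unrolling the fixpoint cast is justified by substituting it into its own body
    have hunroll := hc.subst (E1 := []) (.fix hc)
    simp only [List.length_nil, List.nil_append, cshift_zero, csubst] at hunroll
    exact ⟨_, .single .castFix, .arrow hu, .eq h hunroll⟩

lemma ETyping.reduces_to_value {G : List Ty} {s w : Tm} {T : Ty} (h : ETyping G s T w)
    (hs : Value s) : ∃ w', ReflTransGen Step w w' ∧ Value w' ∧ ETyping G s T w' := by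
  induction h with
  | var => cases hs
  | lit => exact ⟨_, .refl, .lit, .lit⟩
  | abs h => exact ⟨_, .refl, .abs, .abs h⟩
  | app => cases hs
  | eq _ hc ih =>
    obtain ⟨w₀, s₀, hw₀, h₀⟩ := ih hs
    obtain ⟨w', s', hw', h'⟩ := hc.exists_value_of_cast hw₀ h₀
    exact ⟨w', (Step.reflTransGen_cast s₀).trans s', hw', h'⟩

lemma ETyping.simulate_beta {A₀ A B : Ty} {e w v u : Tm}
    (h : ETyping [] (.abs A₀ e) (.arrow A B) w) (hw : Value w)
    (hu : Value u) (hv : ETyping [] v A u) :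
    ∃ r, ReflTransGen Step (.app w u) r ∧ ETyping [] (substTm 0 v e) B r := by
  generalize hG : [] = G, hs : Tm.abs A₀ e = s, hT : Ty.arrow A B = T at h
  induction h generalizing A B u v with
  | var | lit | app => cases hs
  | @abs _ _ _ _ e' h =>
    cases hs; cases hT; subst hG
    exact ⟨substTm 0 u e', .single (.beta hu), by simpa using h.subst (G := []) hv⟩
  | eq _ hc ih =>
    subst hG hs hT
    cases hw with
    | fold =>
      generalize hM : Ty.arrow A B = M at hc
      cases hc
      cases hM
    | arrow hw₀ =>
      generalize hM : Ty.arrow A B = M at hc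
      cases hc with
      | arrow hc₁ hc₂ =>
        cases hM
        obtain ⟨u₁, su₁, hu₁, hv₁⟩ := hc₁.dual.exists_value_of_cast hu hv
        obtain ⟨r, sr, hr⟩ := ih hw₀ hu₁ hv₁ rfl rfl rfl
        exact ⟨_, .head (.castArr hw₀ hu)
          (Step.reflTransGen_cast ((Step.reflTransGen_appr hw₀ su₁).trans sr)), .eq hr hc₂⟩

/-- Simulation of equi-recursive reduction by full iso-recursive reduction. -/
theorem simulation (e1 e1' e2 : Tm) (A : Ty)
    (h : ETyping [] e1 A e1') (hs : EStep e1 e2) :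
    ∃ e2', Relation.ReflTransGen Step e1' e2' ∧ ETyping [] e2 A e2' := by
  generalize hG : [] = G at h
  induction h generalizing e2 with
  | var | lit | abs => cases hs
  | app h₁ h₂ ih₁ ih₂ =>
    subst hG
    cases hs with
    | beta hv =>
      obtain ⟨w, sw, hw, hw'⟩ := h₁.reduces_to_value .abs
      obtain ⟨u, su, hu, hu'⟩ := h₂.reduces_to_value hv
      obtain ⟨r, sr, hr⟩ := hw'.simulate_beta hw hu hu'
      exact ⟨r, (Step.reflTransGen_appl sw).trans ((Step.reflTransGen_appr hw su).trans sr), hr⟩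
    | appl hstep =>
      obtain ⟨a, sa, ha⟩ := ih₁ _ hstep rfl
      exact ⟨_, Step.reflTransGen_appl sa, .app ha h₂⟩
    | appr hv hstep =>
      obtain ⟨w, sw, hw, hw'⟩ := h₁.reduces_to_value hv
      obtain ⟨b, sb, hb⟩ := ih₂ _ hstep rfl
      exact ⟨_, (Step.reflTransGen_appl sw).trans (Step.reflTransGen_appr hw sb), .app hw' hb⟩
  | eq _ hc ih =>
    obtain ⟨e, se, he⟩ := ih e2 hs hG
    exact ⟨_, Step.reflTransGen_cast se, .eq he hc⟩
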